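/- Let Γ ⊆ ℝ² be the unit circle centred at the origin, and for x, y ∈ Γ let ρ(x,y) = arccos⟨x,y⟩ denote the arc-distance (the length of the shorter arc of Γ between x and y). Let ε > 0, let X ⊆ Γ be a closed arc of Γ of length ε, and let Y = {y ∈ Γ : ρ(x,y) ≥ 5ε for all x ∈ X}. Let V ⊆ Γ be a finite set all of whose points are extreme points of P = conv(V). Let v, w, p₁, p₂, q₁, q₂ ∈ V with v, p₁, p₂ ∈ X and w, q₁, q₂ ∈ Y, where p₁ ≠ p₂ and q₁ ≠ q₂. Suppose the segment [p₁,p₂] is an edge of P, i.e. all points of V ∖ {p₁,p₂} lie strictly on one side of the line ℓ_f through p₁ and p₂, and likewise [q₁,q₂] is an edge of P with line ℓ_g through q₁ and q₂. Then dist(v, ℓ_f) · dist(w, ℓ_g) ≤ dist(v, ℓ_g) · dist(w, ℓ_f), where dist denotes the Euclidean distance from a point to a line. -/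

import Mathlib

/-!
Parametrize the circle by `circlePoint θ = (cos θ, sin θ)`. The distance from `circlePoint θ`
to the chord through `circlePoint θ₁` and `circlePoint θ₂` is
`2 |sin ((θ - θ₁) / 2) sin ((θ - θ₂) / 2)|`, so the inequality is the product of the two
inequalities `|sin ((a - aᵢ) / 2) sin ((b - bᵢ) / 2)| ≤ |sin ((a - bᵢ) / 2) sin ((b - aᵢ) / 2)|`,
where `a, aᵢ ∈ [θ₀, θ₀ + ε]` and `b, bᵢ ∈ [θ₀ + 6ε, θ₀ + 2π - 5ε]` are the angles of `v, pᵢ`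
and `w, qᵢ`.
By Ptolemy's identity the left side is `|U - R|`, with `R` the right side and
`U = sin ((b - a) / 2) sin ((bᵢ - aᵢ) / 2) ≥ 0`. Moving an angle by at most `ε` moves these sines
by at most `ε / 2`, and both sines in `R` are at least `5ε / 4`, which gives `U ≤ 2R`.
-/

open scoped RealInnerProductSpace

/-- The arc-distance between two points of the unit circle: the angle `arccos⟨x,y⟩`. -/
noncomputable def arcDist (x y : EuclideanSpace ℝ (Fin 2)) : ℝ :=
  Real.arccos ⟪x, y⟫

open Real Metric Module Set
open scoped EuclideanSpace

section Hyperplane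

variable {E : Type*} [NormedAddCommGroup E] [InnerProductSpace ℝ E]

theorem infDist_setOf_inner_eq {n : E} (hn : ‖n‖ = 1) (x : E) (c : ℝ) :
    infDist x {y | ⟪n, y⟫ = c} = |⟪n, x⟫ - c| := by
  have hfoot : x - (⟪n, x⟫ - c) • n ∈ {y : E | ⟪n, y⟫ = c} := by
    simp [inner_sub_right, inner_smul_right, hn]
  refine le_antisymm ?_ ((le_infDist ⟨_, hfoot⟩).2 fun y hy => ?_)
  · exact (infDist_le_dist_of_mem hfoot).trans_eq (by simp [norm_smul, hn])
  · calc |⟪n, x⟫ - c| = |⟪n, x - y⟫| := by rw [inner_sub_right, hy]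
      _ ≤ ‖n‖ * ‖x - y‖ := abs_real_inner_le_norm n (x - y)
      _ = dist x y := by rw [hn, one_mul, dist_eq_norm]

theorem affineSpan_pair_eq_setOf_inner_eq [Fact (finrank ℝ E = 2)] {p₁ p₂ n : E} {c : ℝ}
    (hp : p₁ ≠ p₂) (hn : n ≠ 0) (h₁ : ⟪n, p₁⟫ = c) (h₂ : ⟪n, p₂⟫ = c) :
    (line[ℝ, p₁, p₂] : Set E) = {y | ⟪n, y⟫ = c} := by
  have hdir : ⟪n, p₂ - p₁⟫ = 0 := by rw [inner_sub_right, h₁, h₂, sub_self]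
  ext y
  have hmem : y ∈ line[ℝ, p₁, p₂] ↔ ∃ r : ℝ, r • (p₂ - p₁) = y - p₁ := by
    simpa using
      vadd_left_mem_affineSpan_pair (k := ℝ) (v := y - p₁) (p₁ := p₁) (p₂ := p₂)
  rw [SetLike.mem_coe, hmem]
  constructor
  · rintro ⟨r, hr⟩
    change ⟪n, y⟫ = c
    rw [← sub_add_cancel y p₁, ← hr, inner_add_right, inner_smul_right, hdir, h₁, mul_zero,
      zero_add]
  · intro hy
    refine Submodule.mem_span_singleton.1 <|
      Submodule.mem_span_singleton_of_inner_eq_zero_of_inner_eq_zero hn (sub_ne_zero.2 hp.symm)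
        (by rw [inner_sub_right, hy, h₁, sub_self]) hdir

end Hyperplane

noncomputable def circlePoint (θ : ℝ) : EuclideanSpace ℝ (Fin 2) := !₂[cos θ, sin θ]

@[simp] theorem circlePoint_apply_zero (θ : ℝ) : circlePoint θ 0 = cos θ := rfl

@[simp] theorem circlePoint_apply_one (θ : ℝ) : circlePoint θ 1 = sin θ := rfl

theorem eq_circlePoint_of_apply {x : EuclideanSpace ℝ (Fin 2)} {θ : ℝ}
    (h₀ : x 0 = cos θ) (h₁ : x 1 = sin θ) : x = circlePoint θ := by
  ext i
  fin_cases i <;> simpa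

theorem inner_circlePoint (θ φ : ℝ) : ⟪circlePoint θ, circlePoint φ⟫ = cos (θ - φ) := by
  simp [PiLp.inner_apply, Fin.sum_univ_two, cos_sub]
  ring

theorem norm_circlePoint (θ : ℝ) : ‖circlePoint θ‖ = 1 := by
  simp [EuclideanSpace.norm_eq, Fin.sum_univ_two]

theorem circlePoint_sub_int_mul_two_pi (θ : ℝ) (k : ℤ) :
    circlePoint (θ - k * (2 * π)) = circlePoint θ :=
  eq_circlePoint_of_apply (by simp [cos_sub_int_mul_two_pi]) (by simp [sin_sub_int_mul_two_pi])

theorem arcDist_circlePoint (θ φ : ℝ) :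
    arcDist (circlePoint θ) (circlePoint φ) = arccos (cos (θ - φ)) := by
  rw [arcDist, inner_circlePoint]

theorem exists_eq_circlePoint {x : EuclideanSpace ℝ (Fin 2)} (hx : ‖x‖ = 1) :
    ∃ θ, x = circlePoint θ := by
  set z : ℂ := Complex.orthonormalBasisOneI.repr.symm x
  have hz : ‖z‖ = 1 := by simp only [z, LinearIsometryEquiv.norm_map, hx]
  have hz₀ : z ≠ 0 := norm_ne_zero_iff.1 (hz ▸ one_ne_zero)
  have hre : z.re = x 0 := by simp [z]
  have him : z.im = x 1 := by simp [z]
  exact ⟨z.arg, eq_circlePoint_of_apply (by rw [Complex.cos_arg hz₀, hz, div_one, hre])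
    (by rw [Complex.sin_arg, hz, div_one, him])⟩

theorem exists_eq_circlePoint_add {x : EuclideanSpace ℝ (Fin 2)} (hx : ‖x‖ = 1) (θ₀ : ℝ) :
    ∃ γ ∈ Ico 0 (2 * π), x = circlePoint (θ₀ + γ) := by
  obtain ⟨θ, rfl⟩ := exists_eq_circlePoint hx
  refine ⟨toIcoMod two_pi_pos 0 (θ - θ₀), toIcoMod_mem_Ico' _ _, ?_⟩
  have h := self_sub_toIcoMod_eq_mul two_pi_pos 0 (θ - θ₀)
  rw [← circlePoint_sub_int_mul_two_pi θ (toIcoDiv two_pi_pos 0 (θ - θ₀))]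
  congr 1
  linarith

theorem arccos_cos_le_abs (x : ℝ) : arccos (cos x) ≤ |x| := by
  rcases le_total |x| π with h | h
  · rw [← cos_abs, arccos_cos (abs_nonneg x) h]
  · exact (arccos_le_pi _).trans h

theorem exists_eq_circlePoint_of_le_arcDist {ε θ₀ : ℝ} (hε : 0 ≤ ε)
    {y : EuclideanSpace ℝ (Fin 2)} (hy : ‖y‖ = 1)
    (h₀ : 5 * ε ≤ arcDist (circlePoint θ₀) y) (h₁ : 5 * ε ≤ arcDist (circlePoint (θ₀ + ε)) y) :
    ∃ b ∈ Icc (θ₀ + 6 * ε) (θ₀ + 2 * π - 5 * ε), y = circlePoint b := by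
  obtain ⟨γ, ⟨hγ₀, hγ₁⟩, rfl⟩ := exists_eq_circlePoint_add hy θ₀
  rw [arcDist_circlePoint] at h₀ h₁
  have hγ : 5 * ε ≤ γ := by
    rcases le_abs'.1 (h₀.trans (arccos_cos_le_abs _)) with h | h <;> linarith
  rw [← cos_add_two_pi] at h₀
  refine ⟨θ₀ + γ, ⟨?_, ?_⟩, rfl⟩
  · rcases le_abs'.1 (h₁.trans (arccos_cos_le_abs _)) with h | h <;> linarith
  · rcases le_abs'.1 (h₀.trans (arccos_cos_le_abs _)) with h | h <;> linarith

theorem two_div_pi_mul_le_sin {δ t : ℝ} (hδ : 0 ≤ δ) (h₁ : δ ≤ t) (h₂ : t ≤ π - δ) :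
    2 / π * δ ≤ sin t := by
  wlog ht : t ≤ π / 2 generalizing t
  · simpa [sin_pi_sub] using this (t := π - t) (by linarith) (by linarith) (by linarith)
  exact (mul_le_mul_of_nonneg_left h₁ (by positivity)).trans (mul_le_sin (hδ.trans h₁) ht)

theorem sin_le_sin_add_abs_sub (x y : ℝ) : sin x ≤ sin y + |x - y| := by
  linarith [(abs_sub_le_iff.1 (abs_sin_sub_sin_le x y)).1]

/-- Ptolemy's theorem for the cyclic quadrilateral with vertices at angles `a, a₁, b, b₁`. -/
theorem sin_half_sub_mul_sin_half_sub (a a₁ b b₁ : ℝ) :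
    sin ((a - a₁) / 2) * sin ((b - b₁) / 2) =
      sin ((b - a) / 2) * sin ((b₁ - a₁) / 2) - sin ((b - a₁) / 2) * sin ((b₁ - a) / 2) := by
  simp only [sub_div, sin_sub]
  ring

theorem abs_sin_half_mul_sin_half_le {ε θ₀ a a₁ b b₁ : ℝ} (hε : 0 ≤ ε)
    (ha : a ∈ Icc θ₀ (θ₀ + ε)) (ha₁ : a₁ ∈ Icc θ₀ (θ₀ + ε))
    (hb : b ∈ Icc (θ₀ + 6 * ε) (θ₀ + 2 * π - 5 * ε))
    (hb₁ : b₁ ∈ Icc (θ₀ + 6 * ε) (θ₀ + 2 * π - 5 * ε)) :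
    |sin ((a - a₁) / 2) * sin ((b - b₁) / 2)| ≤
      |sin ((a - b₁) / 2) * sin ((b - a₁) / 2)| := by
  obtain ⟨ha, ha'⟩ := ha
  obtain ⟨ha₁, ha₁'⟩ := ha₁
  obtain ⟨hb, hb'⟩ := hb
  obtain ⟨hb₁, hb₁'⟩ := hb₁
  have hjordan : 5 / 4 * ε ≤ 2 / π * (5 / 2 * ε) := by
    rw [show 2 / π * (5 / 2 * ε) = 5 * ε / π by ring, le_div_iff₀ pi_pos]
    nlinarith [pi_le_four]
  have hP : 5 / 4 * ε ≤ sin ((b - a₁) / 2) :=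
    hjordan.trans (two_div_pi_mul_le_sin (by positivity) (by linarith) (by linarith))
  have hQ : 5 / 4 * ε ≤ sin ((b₁ - a) / 2) :=
    hjordan.trans (two_div_pi_mul_le_sin (by positivity) (by linarith) (by linarith))
  have hU₁ : 0 ≤ sin ((b - a) / 2) := sin_nonneg_of_nonneg_of_le_pi (by linarith) (by linarith)
  have hU₂ : 0 ≤ sin ((b₁ - a₁) / 2) :=
    sin_nonneg_of_nonneg_of_le_pi (by linarith) (by linarith)
  have hU₁' : sin ((b - a) / 2) ≤ sin ((b - a₁) / 2) + ε / 2 :=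
    (sin_le_sin_add_abs_sub ((b - a) / 2) ((b - a₁) / 2)).trans
      (by gcongr; exact abs_le.2 ⟨by linarith, by linarith⟩)
  have hU₂' : sin ((b₁ - a₁) / 2) ≤ sin ((b₁ - a) / 2) + ε / 2 :=
    (sin_le_sin_add_abs_sub ((b₁ - a₁) / 2) ((b₁ - a) / 2)).trans
      (by gcongr; exact abs_le.2 ⟨by linarith, by linarith⟩)
  have hR : |sin ((a - b₁) / 2) * sin ((b - a₁) / 2)| =
      sin ((b - a₁) / 2) * sin ((b₁ - a) / 2) := by
    rw [← neg_sub b₁ a, neg_div, sin_neg, neg_mul, abs_neg, mul_comm,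
      abs_of_nonneg (by nlinarith)]
  rw [sin_half_sub_mul_sin_half_sub, hR, abs_sub_le_iff]
  constructor
  · nlinarith [mul_le_mul hU₁' hU₂' hU₂ (by linarith),
      mul_nonneg (sub_nonneg.2 hP) (sub_nonneg.2 hQ), mul_nonneg hε (sub_nonneg.2 hP),
      mul_nonneg hε (sub_nonneg.2 hQ)]
  · nlinarith [mul_nonneg hU₁ hU₂]

theorem infDist_circlePoint_affineSpan (θ θ₁ θ₂ : ℝ) (h : circlePoint θ₁ ≠ circlePoint θ₂) :
    infDist (circlePoint θ) (line[ℝ, circlePoint θ₁, circlePoint θ₂]) =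
      2 * |sin ((θ - θ₁) / 2) * sin ((θ - θ₂) / 2)| := by
  have hn := norm_circlePoint ((θ₁ + θ₂) / 2)
  have h₁ : ⟪circlePoint ((θ₁ + θ₂) / 2), circlePoint θ₁⟫ = cos ((θ₂ - θ₁) / 2) := by
    rw [inner_circlePoint]; ring_nf
  have h₂ : ⟪circlePoint ((θ₁ + θ₂) / 2), circlePoint θ₂⟫ = cos ((θ₂ - θ₁) / 2) := by
    rw [inner_circlePoint, ← cos_neg]; ring_nf
  rw [affineSpan_pair_eq_setOf_inner_eq h (norm_ne_zero_iff.1 (hn ▸ one_ne_zero)) h₁ h₂,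
    infDist_setOf_inner_eq hn, inner_circlePoint, cos_sub_cos,
    show ((θ₁ + θ₂) / 2 - θ + (θ₂ - θ₁) / 2) / 2 = -((θ - θ₂) / 2) by ring,
    show ((θ₁ + θ₂) / 2 - θ - (θ₂ - θ₁) / 2) / 2 = -((θ - θ₁) / 2) by ring,
    sin_neg, sin_neg]
  simp only [abs_mul, abs_neg, abs_two]
  ring

theorem cyclic_polygon_slack_inequality_general
    (ε θ₀ : ℝ) (hε : 0 < ε)
    (X Y : Set (EuclideanSpace ℝ (Fin 2)))
    (hX : X = {p : EuclideanSpace ℝ (Fin 2) |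
      ∃ θ ∈ Set.Icc θ₀ (θ₀ + ε), p 0 = Real.cos θ ∧ p 1 = Real.sin θ})
    (hY : Y = {y : EuclideanSpace ℝ (Fin 2) |
      y ∈ Metric.sphere (0 : EuclideanSpace ℝ (Fin 2)) 1 ∧ ∀ x ∈ X, 5 * ε ≤ arcDist x y})
    (v w p₁ p₂ q₁ q₂ : EuclideanSpace ℝ (Fin 2))
    (hvX : v ∈ X) (hp₁X : p₁ ∈ X) (hp₂X : p₂ ∈ X)
    (hwY : w ∈ Y) (hq₁Y : q₁ ∈ Y) (hq₂Y : q₂ ∈ Y)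
    (hp : p₁ ≠ p₂) (hq : q₁ ≠ q₂) :
    Metric.infDist v (affineSpan ℝ ({p₁, p₂} : Set (EuclideanSpace ℝ (Fin 2))) :
        Set (EuclideanSpace ℝ (Fin 2))) *
      Metric.infDist w (affineSpan ℝ ({q₁, q₂} : Set (EuclideanSpace ℝ (Fin 2))) :
        Set (EuclideanSpace ℝ (Fin 2))) ≤
    Metric.infDist v (affineSpan ℝ ({q₁, q₂} : Set (EuclideanSpace ℝ (Fin 2))) :
        Set (EuclideanSpace ℝ (Fin 2))) *
      Metric.infDist w (affineSpan ℝ ({p₁, p₂} : Set (EuclideanSpace ℝ (Fin 2))) :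
        Set (EuclideanSpace ℝ (Fin 2))) := by
  have hXpt : ∀ x ∈ X, ∃ a ∈ Icc θ₀ (θ₀ + ε), x = circlePoint a := by
    rw [hX]
    rintro x ⟨a, ha, h₀, h₁⟩
    exact ⟨a, ha, eq_circlePoint_of_apply h₀ h₁⟩
  have hYpt : ∀ y ∈ Y, ∃ b ∈ Icc (θ₀ + 6 * ε) (θ₀ + 2 * π - 5 * ε), y = circlePoint b := by
    have hend (t : ℝ) (ht : t ∈ Icc 0 ε) : circlePoint (θ₀ + t) ∈ X := by
      rw [hX]
      exact ⟨θ₀ + t, ⟨by linarith [ht.1], by linarith [ht.2]⟩, rfl, rfl⟩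
    rw [hY]
    rintro y ⟨hy, hyX⟩
    refine exists_eq_circlePoint_of_le_arcDist hε.le (by simpa using hy) ?_
      (hyX _ (hend ε ⟨hε.le, le_rfl⟩))
    simpa using hyX _ (hend 0 ⟨le_rfl, hε.le⟩)
  obtain ⟨a, ha, rfl⟩ := hXpt v hvX
  obtain ⟨a₁, ha₁, rfl⟩ := hXpt p₁ hp₁X
  obtain ⟨a₂, ha₂, rfl⟩ := hXpt p₂ hp₂X
  obtain ⟨b, hb, rfl⟩ := hYpt w hwY
  obtain ⟨b₁, hb₁, rfl⟩ := hYpt q₁ hq₁Y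
  obtain ⟨b₂, hb₂, rfl⟩ := hYpt q₂ hq₂Y
  simp only [infDist_circlePoint_affineSpan _ _ _ hp, infDist_circlePoint_affineSpan _ _ _ hq]
  have h₁ := abs_sin_half_mul_sin_half_le hε.le ha ha₁ hb hb₁
  have h₂ := abs_sin_half_mul_sin_half_le hε.le ha ha₂ hb hb₂
  have := mul_le_mul h₁ h₂ (abs_nonneg _) (abs_nonneg _)
  simp only [abs_mul] at this ⊢
  linarith

/-- Slack comparison for cyclic polygons: with `X` an arc of length `ε` of the unit circle
and `Y` the set of points of the circle at arc-distance at least `5ε` from all of `X`, if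
`v` is a vertex on `X`, `w` a vertex in `Y`, `f = [p₁,p₂]` an edge with both endpoints on
`X`, and `g = [q₁,q₂]` an edge with both endpoints in `Y`, then
`dist(v,ℓ_f)·dist(w,ℓ_g) ≤ dist(v,ℓ_g)·dist(w,ℓ_f)`. -/
theorem cyclic_polygon_slack_inequality
    (ε θ₀ : ℝ) (hε : 0 < ε)
    (X Y : Set (EuclideanSpace ℝ (Fin 2)))
    (hX : X = {p : EuclideanSpace ℝ (Fin 2) |
      ∃ θ ∈ Set.Icc θ₀ (θ₀ + ε), p 0 = Real.cos θ ∧ p 1 = Real.sin θ})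
    (hY : Y = {y : EuclideanSpace ℝ (Fin 2) |
      y ∈ Metric.sphere (0 : EuclideanSpace ℝ (Fin 2)) 1 ∧ ∀ x ∈ X, 5 * ε ≤ arcDist x y})
    (V : Finset (EuclideanSpace ℝ (Fin 2)))
    (hV : (V : Set (EuclideanSpace ℝ (Fin 2))) ⊆
      Metric.sphere (0 : EuclideanSpace ℝ (Fin 2)) 1)
    (P : Set (EuclideanSpace ℝ (Fin 2)))
    (hP : P = convexHull ℝ (V : Set (EuclideanSpace ℝ (Fin 2))))
    (hext : ∀ u ∈ V, u ∈ Set.extremePoints ℝ P)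
    (v w p₁ p₂ q₁ q₂ : EuclideanSpace ℝ (Fin 2))
    (hvV : v ∈ V) (hwV : w ∈ V) (hp₁V : p₁ ∈ V) (hp₂V : p₂ ∈ V)
    (hq₁V : q₁ ∈ V) (hq₂V : q₂ ∈ V)
    (hvX : v ∈ X) (hp₁X : p₁ ∈ X) (hp₂X : p₂ ∈ X)
    (hwY : w ∈ Y) (hq₁Y : q₁ ∈ Y) (hq₂Y : q₂ ∈ Y)
    (hp : p₁ ≠ p₂) (hq : q₁ ≠ q₂)
    (hedgef : Disjoint
      (convexHull ℝ ((V : Set (EuclideanSpace ℝ (Fin 2))) \ {p₁, p₂}))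
      (affineSpan ℝ ({p₁, p₂} : Set (EuclideanSpace ℝ (Fin 2))) :
        Set (EuclideanSpace ℝ (Fin 2))))
    (hedgeg : Disjoint
      (convexHull ℝ ((V : Set (EuclideanSpace ℝ (Fin 2))) \ {q₁, q₂}))
      (affineSpan ℝ ({q₁, q₂} : Set (EuclideanSpace ℝ (Fin 2))) :
        Set (EuclideanSpace ℝ (Fin 2)))) :
    Metric.infDist v (affineSpan ℝ ({p₁, p₂} : Set (EuclideanSpace ℝ (Fin 2))) :
        Set (EuclideanSpace ℝ (Fin 2))) *
      Metric.infDist w (affineSpan ℝ ({q₁, q₂} : Set (EuclideanSpace ℝ (Fin 2))) :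
        Set (EuclideanSpace ℝ (Fin 2))) ≤
    Metric.infDist v (affineSpan ℝ ({q₁, q₂} : Set (EuclideanSpace ℝ (Fin 2))) :
        Set (EuclideanSpace ℝ (Fin 2))) *
      Metric.infDist w (affineSpan ℝ ({p₁, p₂} : Set (EuclideanSpace ℝ (Fin 2))) :
        Set (EuclideanSpace ℝ (Fin 2))) :=
  cyclic_polygon_slack_inequality_general ε θ₀ hε X Y hX hY v w p₁ p₂ q₁ q₂ hvX hp₁X hp₂X hwY hq₁Y
    hq₂Y hp hq
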